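/- arXiv:cs/0202003 — 3 statements merged into one kernel-verified Lean document; each statement's English description precedes it below -/
import Mathlib

section
/- Avoidance property of the free-value choice: if f does not occur in the tail or head fields of a collection S of timestamps, and t is any value, then for all (t0,h0) ∈ S, ¬((t,f) < (t0,h0)) and (t,f) ≠ (t0,h0). -/
/-- A bounded timestamp: pair of fields, each `none` (⊥) or a value in `{0,...,4n+2}`. -/
abbrev Ts (n : ℕ) := Option (Fin (4*n+3)) × Option (Fin (4*n+3))

/-- Domination relation on bounded timestamps. -/
def tsDom {n : ℕ} (a b : Ts n) : Prop :=
  (a.2 = b.1 ∧ a.1 ≠ b.2 ∧ b.2 ≠ none) ∨ (a.1 = none ∧ a.2 = none ∧ b.2 ≠ none)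

/-- Avoidance property of the free-value choice. -/
theorem free_value_avoids (n : ℕ) (S : Set (Ts n)) (f : Fin (4*n+3))
    (hf : ∀ s ∈ S, s.1 ≠ some f ∧ s.2 ≠ some f) (t : Option (Fin (4*n+3))) :
    ∀ s ∈ S, ¬ tsDom ((t, some f) : Ts n) s ∧ ((t, some f) : Ts n) ≠ s := by
  intro s hs
  obtain ⟨h1, h2⟩ := hf s hs
  constructor
  · rintro (⟨ha, -, -⟩ | ⟨-, hb, -⟩)
    · exact h1 ha.symm
    · simp at hb
  · intro he
    exact h2 (by rw [← he])
end

section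
/- Timestamp criterion for linearizability (sufficiency, abstract form): Let Ops be a finite set of operations, each either a Write or a Read, with a strict interval-order precedence ≺ and a value val(op). Suppose there is a function ts from operations to rationals such that (Uniqueness) distinct Writes have distinct timestamps, (Integrity) for each Read r there is a Write w with ts(w) = ts(r), val(w) = val(r), and ¬(r ≺ w), and (Precedence) op1 ≺ op2 implies ts(op1) ≤ ts(op2). Further suppose there is an initial Write preceding all other operations. Then there exists a linear extension of ≺ on Ops in which every Read returns the value of the last Write preceding it in the linear order. -/
/-!
Order the operations by timestamp, put Writes before Reads of equal timestamp, and break the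
remaining ties by a linear extension of `≺` (Szpilrajn). This extends `≺`: if `a ≺ b` with
`ts a = ts b`, then `a` cannot be a Read and `b` a Write, since by uniqueness `b` would be the
integrity witness of `a`, which `a` does not precede. Each Read `r` comes after its integrity
witness `w`, and a Write between them would share the timestamp of `w`, hence equal `w`.
-/

theorem exists_isStrictTotalOrder_extension {α : Type*} (r : α → α → Prop) [IsStrictOrder α r] :
    ∃ s : α → α → Prop, IsStrictTotalOrder α s ∧ ∀ a b, r a b → s a b := by
  let := partialOrderOfSO r
  refine ⟨fun a b => toLinearExtension a < toLinearExtension b, ?_, fun a b hab => ?_⟩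
  · exact (inferInstance : IsStrictTotalOrder (LinearExtension α) (· < ·))
  · exact lt_of_le_of_ne (toLinearExtension.monotone (Or.inr hab))
      fun h => irrefl_of r a ((show a = b from h) ▸ hab)

section TimestampOrder

variable {α β : Type*} [LinearOrder β]

def timestampOrder (ts : α → β) (isW : α → Bool) (tie : α → α → Prop) (a b : α) : Prop :=
  Prod.Lex (· < ·) (Prod.Lex (· < ·) tie) (ts a, !isW a, a) (ts b, !isW b, b)

instance (ts : α → β) (isW : α → Bool) (tie : α → α → Prop) [IsStrictTotalOrder α tie] :
    IsStrictTotalOrder α (timestampOrder ts isW tie) where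
  toTrichotomous := Std.trichotomous_of_rel_or_eq_or_rel_swap fun {a b} ↦ by
    convert! trichotomous_of (Prod.Lex (· < ·) <| Prod.Lex (· < ·) tie) _ _
    · simp only [Prod.ext_iff, ← and_assoc, imp_and, iff_and_self]
      exact ⟨fun h => h ▸ rfl, fun h => h ▸ rfl⟩
    · infer_instance
  irrefl a := by rw [timestampOrder]; exact irrefl _
  trans a b c := by rw [timestampOrder]; exact _root_.trans

variable {ts : α → β} {isW : α → Bool} {tie : α → α → Prop} {a b : α}

theorem timestampOrder_iff : timestampOrder ts isW tie a b ↔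
    ts a < ts b ∨ ts a = ts b ∧ (isW a = true ∧ isW b = false ∨ isW a = isW b ∧ tie a b) := by
  simp only [timestampOrder, Prod.lex_iff]
  cases isW a <;> cases isW b <;> simp

theorem le_of_timestampOrder (h : timestampOrder ts isW tie a b) : ts a ≤ ts b := by
  rcases timestampOrder_iff.1 h with h | ⟨h, -⟩
  exacts [h.le, h.le]

theorem timestampOrder_of_write_of_read (ha : isW a = true) (hb : isW b = false)
    (h : ts a = ts b) : timestampOrder ts isW tie a b :=
  timestampOrder_iff.2 (Or.inr ⟨h, Or.inl ⟨ha, hb⟩⟩)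

theorem timestampOrder_of_prec {prec : α → α → Prop}
    (huniq : ∀ a b, isW a = true → isW b = true → a ≠ b → ts a ≠ ts b)
    (hint : ∀ r, isW r = false → ∃ w, isW w = true ∧ ts w = ts r ∧ ¬ prec r w)
    (hprec : ∀ a b, prec a b → ts a ≤ ts b) (htie : ∀ a b, prec a b → tie a b)
    (hab : prec a b) : timestampOrder ts isW tie a b := by
  refine timestampOrder_iff.2 ((hprec a b hab).lt_or_eq.imp_right fun hts => ⟨hts, ?_⟩)
  cases ha : isW a <;> cases hb : isW b
  · exact Or.inr ⟨rfl, htie a b hab⟩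
  · obtain ⟨w, hw, hwts, hnot⟩ := hint a ha
    obtain rfl : w = b := by_contra fun hne => huniq w b hw hb hne (hwts.trans hts)
    exact absurd hab hnot
  · exact Or.inl ⟨rfl, rfl⟩
  · exact Or.inr ⟨rfl, htie a b hab⟩

theorem not_timestampOrder_of_ts_eq [IsStrictTotalOrder α tie] {r w w' : α}
    (huniq : ∀ a b, isW a = true → isW b = true → a ≠ b → ts a ≠ ts b)
    (hw : isW w = true) (hw' : isW w' = true) (hts : ts w = ts r)
    (hw'r : timestampOrder ts isW tie w' r) : ¬ timestampOrder ts isW tie w w' := by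
  intro hww'
  obtain rfl | hne := eq_or_ne w' w
  · exact irrefl _ hww'
  have hlt : ts w' < ts w :=
    (hts ▸ le_of_timestampOrder hw'r).lt_of_ne (huniq w' w hw' hw hne)
  exact hlt.not_ge (le_of_timestampOrder hww')

end TimestampOrder

theorem timestamp_linearizability_general {Op V : Type*}
    (isW : Op → Bool) (val : Op → V) (prec : Op → Op → Prop) (ts : Op → ℚ)
    (hirr : ∀ a, ¬ prec a a)
    (htrans : ∀ a b c, prec a b → prec b c → prec a c)
    (huniq : ∀ a b, isW a = true → isW b = true → a ≠ b → ts a ≠ ts b)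
    (hint : ∀ r, isW r = false →
      ∃ w, isW w = true ∧ ts w = ts r ∧ val w = val r ∧ ¬ prec r w)
    (hprec : ∀ a b, prec a b → ts a ≤ ts b) :
    ∃ lt : Op → Op → Prop, IsStrictTotalOrder Op lt ∧
      (∀ a b, prec a b → lt a b) ∧
      (∀ r, isW r = false → ∃ w, isW w = true ∧ lt w r ∧ val w = val r ∧
        ∀ w', isW w' = true → lt w' r → ¬ lt w w') := by
  have : IsStrictOrder Op prec := { irrefl := hirr, trans := htrans }
  obtain ⟨tie, htie_total, htie⟩ := exists_isStrictTotalOrder_extension prec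
  have hint' : ∀ r, isW r = false → ∃ w, isW w = true ∧ ts w = ts r ∧ ¬ prec r w :=
    fun r hr => (hint r hr).imp fun _ ⟨hw, hts, _, hnot⟩ => ⟨hw, hts, hnot⟩
  refine ⟨timestampOrder ts isW tie, inferInstance,
    fun a b => timestampOrder_of_prec huniq hint' hprec htie, fun r hr => ?_⟩
  obtain ⟨w, hw, hts, hval, -⟩ := hint r hr
  exact ⟨w, hw, timestampOrder_of_write_of_read hw hr hts, hval,
    fun w' hw' hw'r => not_timestampOrder_of_ts_eq huniq hw hw' hts hw'r⟩

/-- Timestamp criterion for linearizability (sufficiency, abstract form).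
`isW op = true` means `op` is a Write, `isW op = false` a Read. -/
theorem timestamp_linearizability {Op V : Type*} [Fintype Op]
    (isW : Op → Bool) (val : Op → V) (prec : Op → Op → Prop) (ts : Op → ℚ)
    (w0 : Op)
    (hirr : ∀ a, ¬ prec a a)
    (htrans : ∀ a b c, prec a b → prec b c → prec a c)
    (hinterval : ∀ a b c d, prec a b → prec c d → ¬ prec c b → prec a d)
    (huniq : ∀ a b, isW a = true → isW b = true → a ≠ b → ts a ≠ ts b)
    (hint : ∀ r, isW r = false →
      ∃ w, isW w = true ∧ ts w = ts r ∧ val w = val r ∧ ¬ prec r w)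
    (hprec : ∀ a b, prec a b → ts a ≤ ts b)
    (hw0 : isW w0 = true) (hw0first : ∀ op, op ≠ w0 → prec w0 op) :
    ∃ lt : Op → Op → Prop, IsStrictTotalOrder Op lt ∧
      (∀ a b, prec a b → lt a b) ∧
      (∀ r, isW r = false → ∃ w, isW w = true ∧ lt w r ∧ val w = val r ∧
        ∀ w', isW w' = true → lt w' r → ¬ lt w w') :=
  timestamp_linearizability_general isW val prec ts hirr htrans huniq hint hprec
end

section
/- Insertion of overlapped Reads preserves register semantics: if L is a linear order on a set of operations obeying register semantics, and r is a new Read whose value equals the value of a Write w ∈ L, then inserting r immediately after w yields a linear order that still obeys register semantics. -/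
/-- A linear (strict) order on operations obeys register semantics if every
Read returns the value of the latest Write preceding it. -/
def Obeys {α V : Type*} (lt : α → α → Prop) (isW : α → Bool) (val : α → V) : Prop :=
  ∀ r, isW r = false → ∃ w, isW w = true ∧ lt w r ∧ val w = val r ∧
    ∀ w', isW w' = true → lt w' r → ¬ lt w w'

/-- Insert a new element (`none`) immediately after `w`: everything up to and
including `w` precedes it, and it precedes everything after `w`. -/
def insertAfter {α : Type*} (lt : α → α → Prop) (w : α) :
    Option α → Option α → Prop
  | some a, some b => lt a b
  | some a, none => lt a w ∨ a = w
  | none, some b => lt w b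
  | none, none => False

/-! The read is placed directly after `w`, so `w` is the latest write preceding it and it returns
`w`'s value; since it is not a write, every other read keeps its latest preceding write. -/

section insertAfter

variable {α : Type*} (lt : α → α → Prop) (w : α)

instance insertAfter.instIrrefl [Std.Irrefl lt] : Std.Irrefl (insertAfter lt w) where
  irrefl
    | some a => irrefl (r := lt) a
    | none => id

instance insertAfter.instTrans [IsStrictOrder α lt] : IsTrans (Option α) (insertAfter lt w) where
  trans
    | some _, some _, some _, hab, hbc => _root_.trans (r := lt) hab hbc
    | some _, some _, none, hab, hbc =>
      hbc.elim (.inl <| _root_.trans (r := lt) hab ·) (· ▸ .inl hab)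
    | some _, none, some _, hab, hbc => hab.elim (_root_.trans (r := lt) · hbc) (· ▸ hbc)
    | none, some _, some _, hab, hbc => _root_.trans (r := lt) hab hbc
    | none, some _, none, hab, hbc => hbc.elim (asymm (r := lt) hab) (irrefl w <| · ▸ hab)
    | none, none, _, hab, _ => hab.elim
    | _, none, none, _, hbc => hbc.elim

instance insertAfter.instTrichotomous [Std.Trichotomous lt] :
    Std.Trichotomous (insertAfter lt w) where
  trichotomous
    | some a, some b, hab, hba => congrArg some (Std.Trichotomous.trichotomous a b hab hba)
    | some a, none, hab, hba =>
      (hba <| (trichotomous_of lt a w).resolve_left (hab ∘ .inl) |>.resolve_left (hab ∘ .inr)).elim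
    | none, some b, hab, hba =>
      (hab <| (trichotomous_of lt b w).resolve_left (hba ∘ .inl) |>.resolve_left (hba ∘ .inr)).elim
    | none, none, _, _ => rfl

instance insertAfter.instIsStrictTotalOrder [IsStrictTotalOrder α lt] :
    IsStrictTotalOrder (Option α) (insertAfter lt w) := {}

theorem Obeys.insertAfter {V : Type*} [Std.Asymm lt] {isW : α → Bool} {val : α → V}
    (h : Obeys lt isW val) (hw : isW w = true) :
    Obeys (_root_.insertAfter lt w) (fun o => o.elim false isW) (fun o => o.elim (val w) val)
  | none, _ => ⟨some w, hw, .inr rfl, rfl, fun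
      | some _, _, .inl hw'w => asymm (r := lt) hw'w
      | some _, _, .inr rfl => irrefl (r := lt) _⟩
  | some r, hr =>
    let ⟨w₀, hw₀, hw₀r, hval, hlatest⟩ := h r hr
    ⟨some w₀, hw₀, hw₀r, hval, fun
      | some w', hw', hw'r => hlatest w' hw' hw'r⟩

end insertAfter

/-- Inserting a Read `r` (modeled as `none : Option α`) with value `vr`
immediately after a Write `w` with the same value preserves register
semantics, and the result is still a strict total order. -/
theorem insert_overlapped_read {α V : Type*} (lt : α → α → Prop)
    (isW : α → Bool) (val : α → V) (w : α) (vr : V)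
    (hlt : IsStrictTotalOrder α lt)
    (hobeys : Obeys lt isW val)
    (hw : isW w = true) (hval : val w = vr) :
    IsStrictTotalOrder (Option α) (insertAfter lt w) ∧
    Obeys (insertAfter lt w)
      (fun o => o.elim false isW) (fun o => o.elim vr val) :=
  hval ▸ ⟨inferInstance, hobeys.insertAfter lt w hw⟩
end
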